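/- arXiv:1709.07999 — 7 statements merged into one kernel-verified Lean document; each statement's English description precedes it below -/
import Mathlib

section
/- For all n ≥ k ≥ 0, the vertical recurrence w_{m,r,q}(n+1,k+1) = ∑_{j=k}^{n} (-1)^{n-j} q^{C(j,2) - C(n+1,2)} w_{m,r,q}(j,k) ∏_{i=j+1}^{n} (m[i]_q + r) holds, where the product is 1 when j = n. -/
open Finset

noncomputable def qint (q : ℂ) (n : ℕ) : ℂ := (q ^ n - 1) / (q - 1)

/-- (q,r)-Whitney numbers of the first kind, via the triangular recurrence
`w(n+1,k) = q^{-n} (w(n,k-1) - (m[n]_q + r) w(n,k))`, with `w(0,0)=1` and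
`w(n,k)=0` for `k>n` (the `k<0` values are zero, absorbed in the `k=0` case). -/
noncomputable def qw (q m r : ℂ) : ℕ → ℕ → ℂ
  | 0, 0 => 1
  | 0, _ + 1 => 0
  | n + 1, 0 => q ^ (-(n : ℤ)) * (0 - (m * qint q n + r) * qw q m r n 0)
  | n + 1, k + 1 => q ^ (-(n : ℤ)) * (qw q m r n k - (m * qint q n + r) * qw q m r n (k + 1))

/-- (q,r)-Whitney numbers of the second kind, via
`W(n+1,k) = q^{k-1} W(n,k-1) + (m[k]_q + r) W(n,k)`, with `W(0,0)=1`. -/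
noncomputable def qW (q m r : ℂ) : ℕ → ℕ → ℂ
  | 0, 0 => 1
  | 0, _ + 1 => 0
  | n + 1, 0 => (m * qint q 0 + r) * qW q m r n 0
  | n + 1, k + 1 => q ^ k * qW q m r n k + (m * qint q (k + 1) + r) * qW q m r n (k + 1)

/-! For fixed `k`, the sequence `n ↦ w(n, k+1)` satisfies the first-order linear recurrence
`x(n+1) = -q^{-n}(m[n]_q + r) x(n) + q^{-n} w(n,k)` and vanishes at `n = k`. Unrolling it writes
`w(n+1,k+1)` as a sum over `j` of the forcing terms `q^{-j} w(j,k)` times the products of the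
coefficients over `j < i ≤ n`; the powers of `q` collect to `q^{-(j + (j+1) + ⋯ + n)}`, and
`j + (j+1) + ⋯ + n = C(n+1,2) - C(j,2)`. -/

theorem apply_succ_eq_prod_mul_add_sum_of_recurrence {R : Type*} [CommSemiring R]
    {x u v : ℕ → R} {k : ℕ} (hrec : ∀ n ≥ k, x (n + 1) = u n * x n + v n) {n : ℕ}
    (hkn : k ≤ n) :
    x (n + 1) = (∏ i ∈ Icc k n, u i) * x k + ∑ j ∈ Icc k n, (∏ i ∈ Ioc j n, u i) * v j := by
  induction n, hkn using Nat.le_induction with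
  | base => simp [hrec k le_rfl]
  | succ n hkn ih =>
    have hsum : ∑ j ∈ Icc k n, (∏ i ∈ Ioc j (n + 1), u i) * v j =
        u (n + 1) * ∑ j ∈ Icc k n, (∏ i ∈ Ioc j n, u i) * v j := by
      rw [mul_sum]
      exact sum_congr rfl fun j hj => by rw [prod_Ioc_succ_top (mem_Icc.mp hj).2]; ring
    rw [hrec (n + 1) (by omega), ih, prod_Icc_succ_top (by omega), sum_Icc_succ_top (by omega),
      hsum, Ioc_self, prod_empty]
    ring

theorem Nat.choose_two_add_add_sum_Ioc {j n : ℕ} (hjn : j ≤ n) :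
    j.choose 2 + (j + ∑ i ∈ Ioc j n, i) = (n + 1).choose 2 := by
  induction n, hjn using Nat.le_induction with
  | base => simp [Nat.choose_succ_succ (n := j), add_comm]
  | succ n hjn ih =>
    rw [sum_Ioc_succ_top hjn, Nat.choose_succ_succ (n := n + 1), Nat.choose_one_right, ← ih]
    ring

theorem zpow_neg_mul_prod_Ioc_neg_zpow_neg_mul {K : Type*} [Field K] (q : K) (c : ℕ → K)
    {j n : ℕ} (hjn : j ≤ n) :
    q ^ (-(j : ℤ)) * ∏ i ∈ Ioc j n, -(q ^ (-(i : ℤ)) * c i) =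
      (-1) ^ (n - j) * q ^ ((j.choose 2 : ℤ) - ((n + 1).choose 2 : ℤ)) * ∏ i ∈ Ioc j n, c i := by
  have hexp : (j.choose 2 : ℤ) - ((n + 1).choose 2 : ℤ) = -((j + ∑ i ∈ Ioc j n, i : ℕ) : ℤ) := by
    rw [← Nat.choose_two_add_add_sum_Ioc hjn]
    push_cast
    ring
  rw [hexp, prod_neg, prod_mul_distrib, Nat.card_Ioc]
  simp only [zpow_neg, zpow_natCast, ← inv_pow, pow_add]
  rw [prod_pow_eq_pow_sum]
  ring

theorem qw_eq_zero_of_lt (q m r : ℂ) : ∀ {n k : ℕ}, n < k → qw q m r n k = 0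
  | 0, _ + 1, _ => rfl
  | n + 1, k + 1, h => by
    rw [qw, qw_eq_zero_of_lt q m r (by omega), qw_eq_zero_of_lt q m r (by omega)]
    ring

theorem stmt3_general (q m r : ℂ) (n k : ℕ) (hkn : k ≤ n) :
    qw q m r (n + 1) (k + 1) =
      ∑ j ∈ Finset.Icc k n, (-1) ^ (n - j) * q ^ ((j.choose 2 : ℤ) - ((n + 1).choose 2 : ℤ)) *
        qw q m r j k * ∏ i ∈ Finset.Icc (j + 1) n, (m * qint q i + r) := by
  have hrec : ∀ n ≥ k, qw q m r (n + 1) (k + 1) =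
      -(q ^ (-(n : ℤ)) * (m * qint q n + r)) * qw q m r n (k + 1) +
        q ^ (-(n : ℤ)) * qw q m r n k :=
    fun n _ => by rw [qw]; ring
  refine (apply_succ_eq_prod_mul_add_sum_of_recurrence (x := fun n ↦ qw q m r n (k + 1))
    (u := fun n ↦ -(q ^ (-(n : ℤ)) * (m * qint q n + r)))
    (v := fun n ↦ q ^ (-(n : ℤ)) * qw q m r n k) hrec hkn).trans ?_
  rw [qw_eq_zero_of_lt q m r k.lt_succ_self, mul_zero, zero_add]
  refine sum_congr rfl fun j hj => ?_
  rw [Icc_add_one_left_eq_Ioc]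
  linear_combination qw q m r j k *
    zpow_neg_mul_prod_Ioc_neg_zpow_neg_mul q (fun i ↦ m * qint q i + r) (mem_Icc.mp hj).2

theorem stmt3 (q m r : ℂ) (hq0 : q ≠ 0) (hq1 : q ≠ 1) (n k : ℕ) (hkn : k ≤ n) :
    qw q m r (n + 1) (k + 1) =
      ∑ j ∈ Finset.Icc k n, (-1) ^ (n - j) * q ^ ((j.choose 2 : ℤ) - ((n + 1).choose 2 : ℤ)) *
        qw q m r j k * ∏ i ∈ Finset.Icc (j + 1) n, (m * qint q i + r) :=
  stmt3_general q m r n k hkn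
end

section
/- For all n ≥ k ≥ 0, the vertical recurrence W_{m,r,q}(n+1,k+1) = q^k ∑_{j=k}^{n} (m[k+1]_q + r)^{n-j} W_{m,r,q}(j,k) holds. -/
open Finset

/-!
For fixed `k`, the column `a n = W(n, k+1)` satisfies the first-order linear
recurrence `a (n+1) = c a n + q^k W(n, k)` with `c = m[k+1]_q + r` and `a 0 = 0`, so unrolling
it gives `a (n+1) = ∑_{j ≤ n} c^(n-j) q^k W(j, k)`; the terms with `j < k` vanish.
-/

theorem eq_sum_pow_mul_of_succ_eq {R : Type*} [CommSemiring R] {a b : ℕ → R} {c : R}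
    (h0 : a 0 = 0) (hsucc : ∀ n, a (n + 1) = b n + c * a n) (n : ℕ) :
    a (n + 1) = ∑ j ∈ range (n + 1), c ^ (n - j) * b j := by
  induction n with
  | zero => simp [hsucc, h0]
  | succ n ih =>
    rw [hsucc, ih, sum_range_succ _ (n + 1), mul_sum, Nat.sub_self, pow_zero, one_mul, add_comm]
    congr 1
    refine sum_congr rfl fun j hj => ?_
    rw [show n + 1 - j = n - j + 1 by have := mem_range.mp hj; omega, pow_succ']
    ring

theorem qW_eq_zero_of_lt (q m r : ℂ) : ∀ {n k : ℕ}, n < k → qW q m r n k = 0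
  | 0, _ + 1, _ => rfl
  | n + 1, k + 1, h => by
    rw [qW, qW_eq_zero_of_lt q m r (by omega), qW_eq_zero_of_lt q m r (by omega)]
    ring

theorem stmt4_general (q m r : ℂ) (n k : ℕ) :
    qW q m r (n + 1) (k + 1) =
      q ^ k * ∑ j ∈ Finset.Icc k n, (m * qint q (k + 1) + r) ^ (n - j) * qW q m r j k := by
  have unrolled := eq_sum_pow_mul_of_succ_eq (a := fun n => qW q m r n (k + 1))
    (b := fun j => q ^ k * qW q m r j k) (c := m * qint q (k + 1) + r) rfl (fun _ => rfl) n
  have below_k_vanish : ∑ j ∈ range (n + 1), (m * qint q (k + 1) + r) ^ (n - j) * qW q m r j k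
      = ∑ j ∈ Icc k n, (m * qint q (k + 1) + r) ^ (n - j) * qW q m r j k := by
    refine (sum_subset (fun j hj => ?_) fun j hj hj' => ?_).symm
    · exact mem_range.mpr (Nat.lt_succ_of_le (mem_Icc.mp hj).2)
    · have hjk : j < k := by simp only [mem_range, mem_Icc, not_and, not_le] at hj hj'; omega
      rw [qW_eq_zero_of_lt q m r hjk, mul_zero]
  rw [unrolled, ← below_k_vanish, mul_sum]
  exact sum_congr rfl fun _ _ => mul_left_comm _ _ _

theorem stmt4 (q m r : ℂ) (hq0 : q ≠ 0) (hq1 : q ≠ 1) (n k : ℕ) (hkn : k ≤ n) :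
    qW q m r (n + 1) (k + 1) =
      q ^ k * ∑ j ∈ Finset.Icc k n, (m * qint q (k + 1) + r) ^ (n - j) * qW q m r j k :=
  stmt4_general q m r n k
end

section
/- For all 0 ≤ k ≤ n, the horizontal recurrence w_{m,r,q}(n,k) = q^n ∑_{j=0}^{n-k} (m[n]_q + r)^j w_{m,r,q}(n+1, k+j+1) holds. -/
/-
Solving the defining recurrence for its first term gives the "inverted" relation
`w(n,k) = qⁿ w(n+1,k+1) + (m[n]_q + r) w(n,k+1)`, a first-order linear recurrence in `k`.
Unrolling it `n - k + 1` times reaches `w(n,n+1) = 0`, leaving exactly the stated sum.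
-/

open Finset

theorem eq_sum_add_pow_mul_of_forall_eq_add_mul {R : Type*} [CommSemiring R] (a b : ℕ → R)
    (c : R) (h : ∀ k, a k = b k + c * a (k + 1)) (k d : ℕ) :
    a k = ∑ j ∈ range d, c ^ j * b (k + j) + c ^ d * a (k + d) := by
  induction d with
  | zero => simp
  | succ d ih =>
    rw [ih, h (k + d), sum_range_succ, ← add_assoc k d 1]
    ring

theorem qw_of_lt (q m r : ℂ) {n k : ℕ} (h : n < k) : qw q m r n k = 0 := by
  induction n generalizing k with
  | zero =>
    obtain ⟨k, rfl⟩ := Nat.exists_eq_add_of_lt h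
    rfl
  | succ n ih =>
    obtain ⟨k, rfl⟩ : ∃ k', k = k' + 1 := Nat.exists_eq_add_of_le' (by omega)
    rw [qw, ih (by omega), ih (by omega)]
    ring

theorem qw_eq_pow_mul_qw_succ_add (q m r : ℂ) (hq0 : q ≠ 0) (n k : ℕ) :
    qw q m r n k =
      q ^ n * qw q m r (n + 1) (k + 1) + (m * qint q n + r) * qw q m r n (k + 1) := by
  rw [qw, ← mul_assoc, ← zpow_natCast, ← zpow_add₀ hq0]
  simp

theorem stmt5_general (q m r : ℂ) (hq0 : q ≠ 0) (n k : ℕ) (hkn : k ≤ n) :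
    qw q m r n k =
      q ^ n * ∑ j ∈ Finset.range (n - k + 1),
        (m * qint q n + r) ^ j * qw q m r (n + 1) (k + j + 1) := by
  have h := eq_sum_add_pow_mul_of_forall_eq_add_mul (qw q m r n)
    (fun k ↦ q ^ n * qw q m r (n + 1) (k + 1)) _ (qw_eq_pow_mul_qw_succ_add q m r hq0 n) k
    (n - k + 1)
  rw [h, qw_of_lt q m r (by omega), mul_zero, add_zero, mul_sum]
  exact sum_congr rfl fun j _ ↦ by ring

theorem stmt5 (q m r : ℂ) (hq0 : q ≠ 0) (hq1 : q ≠ 1) (n k : ℕ) (hkn : k ≤ n) :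
    qw q m r n k =
      q ^ n * ∑ j ∈ Finset.range (n - k + 1),
        (m * qint q n + r) ^ j * qw q m r (n + 1) (k + j + 1) :=
  stmt5_general q m r hq0 n k hkn
end

section
/- For each fixed k ≥ 0, the formal power series identity ∑_{n=k}^{∞} W_{m,r,q}(n,k) t^n = q^{C(k,2)} t^k / ∏_{i=0}^{k} (1 - (m[i]_q + r) t) holds in the ring of formal power series over the complex numbers. -/
open Finset

/-!
Multiplying the recurrence by `t^(n+1)` and summing over `n` shows that the generating
function `G_k(t) = ∑ₙ W(n,k) tⁿ` satisfies `G_0(t) (1 - r t) = 1` and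
`G_{k+1}(t) (1 - (m[k+1]_q + r) t) = q^k t G_k(t)`. Telescoping these relations gives
`G_k(t) ∏_{i ≤ k} (1 - (m[i]_q + r) t) = q^(0 + 1 + ⋯ + (k-1)) t^k = q^C(k,2) t^k`.
-/

namespace PowerSeries

variable {R : Type*} [CommRing R]

theorem coeff_succ_mul_one_sub_C_mul_X (f : R⟦X⟧) (c : R) (n : ℕ) :
    coeff (n + 1) (f * (1 - C c * X)) = coeff (n + 1) f - c * coeff n f := by
  rw [mul_sub, mul_one, mul_left_comm, map_sub, coeff_C_mul, coeff_succ_mul_X]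

end PowerSeries

open PowerSeries

noncomputable def qWGenFun (q m r : ℂ) (k : ℕ) : ℂ⟦X⟧ :=
  PowerSeries.mk fun n => qW q m r n k

theorem qWGenFun_zero_mul (q m r : ℂ) :
    qWGenFun q m r 0 * (1 - C (m * qint q 0 + r) * X) = 1 := by
  ext (_ | n)
  · simp [qWGenFun, qW]
  · rw [coeff_succ_mul_one_sub_C_mul_X]
    simp [qWGenFun, qW]

theorem qWGenFun_succ_mul (q m r : ℂ) (k : ℕ) :
    qWGenFun q m r (k + 1) * (1 - C (m * qint q (k + 1) + r) * X) =
      C (q ^ k) * X * qWGenFun q m r k := by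
  ext (_ | n)
  · simp [qWGenFun, qW]
  · rw [coeff_succ_mul_one_sub_C_mul_X, mul_assoc, coeff_C_mul, mul_comm X, coeff_succ_mul_X]
    simp only [qWGenFun, coeff_mk, qW]
    ring

theorem qWGenFun_mul_prod (q m r : ℂ) (k : ℕ) :
    qWGenFun q m r k * ∏ i ∈ range (k + 1), (1 - C (m * qint q i + r) * X) =
      C (q ^ k.choose 2) * X ^ k := by
  induction k with
  | zero => simpa using qWGenFun_zero_mul q m r
  | succ k ih =>
    have hchoose : (k + 1).choose 2 = k + k.choose 2 := by
      rw [Nat.choose_succ_succ, Nat.choose_one_right]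
    calc qWGenFun q m r (k + 1) * ∏ i ∈ range (k + 2), (1 - C (m * qint q i + r) * X)
        = qWGenFun q m r (k + 1) * (1 - C (m * qint q (k + 1) + r) * X) *
            ∏ i ∈ range (k + 1), (1 - C (m * qint q i + r) * X) := by
          rw [prod_range_succ]; ring
      _ = C (q ^ k) * X * C (q ^ k.choose 2) * X ^ k := by
          rw [qWGenFun_succ_mul, mul_assoc, ih]; ring
      _ = C (q ^ (k + 1).choose 2) * X ^ (k + 1) := by
          rw [hchoose, pow_add, map_mul]; ring

theorem stmt7_general (q m r : ℂ) (k : ℕ) :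
    (PowerSeries.mk fun n => qW q m r n k) *
        ∏ i ∈ Finset.range (k + 1), (1 - PowerSeries.C (m * qint q i + r) * PowerSeries.X) =
      PowerSeries.C (q ^ k.choose 2) * PowerSeries.X ^ k :=
  qWGenFun_mul_prod q m r k

theorem stmt7 (q m r : ℂ) (hq0 : q ≠ 0) (hq1 : q ≠ 1) (k : ℕ) :
    (PowerSeries.mk fun n => qW q m r n k) *
        ∏ i ∈ Finset.range (k + 1), (1 - PowerSeries.C (m * qint q i + r) * PowerSeries.X) =
      PowerSeries.C (q ^ k.choose 2) * PowerSeries.X ^ k :=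
  stmt7_general q m r k
end

section
/- For all 0 ≤ k ≤ n, w_{m,r,q}(n,k) = (-1)^{n-k} q^{-C(n,2)} e_{n-k}(r + [0]_q m, r + [1]_q m, ..., r + [n-1]_q m), i.e., the sum over all strictly increasing sequences 0 ≤ i_1 < i_2 < ... < i_{n-k} ≤ n-1 of the products ∏_{j=1}^{n-k} (r + [i_j]_q m). -/
open Finset

/-! `w(n, ·)` are the coefficients of `q^{-C(n,2)} ∏_{i<n} (X - (r + [i]_q m))`: the recurrence
says exactly that multiplying by `q^{-n} (X - (r + [n]_q m))` passes from row `n` to row `n + 1`.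
Vieta's formulas then read off the coefficients as signed elementary symmetric functions. -/

open Polynomial

theorem Finset.prod_X_sub_C_coeff {R σ : Type*} [CommRing R] (s : Finset σ) (a : σ → R) {k : ℕ}
    (h : k ≤ #s) :
    (∏ i ∈ s, (X - C (a i))).coeff k =
      (-1) ^ (#s - k) * ∑ t ∈ s.powersetCard (#s - k), ∏ i ∈ t, a i := by
  simp_rw [sub_eq_add_neg, ← map_neg C]
  rw [Finset.prod_X_add_C_coeff _ _ h, Finset.mul_sum]
  refine Finset.sum_congr rfl fun t ht => ?_
  rw [Finset.prod_neg, (Finset.mem_powersetCard.1 ht).2]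

theorem zpow_neg_natCast_add {K : Type*} [DivisionRing K] (q : K) (a b : ℕ) :
    q ^ (-((a + b : ℕ) : ℤ)) = q ^ (-(b : ℤ)) * q ^ (-(a : ℤ)) := by
  simp only [zpow_neg, zpow_natCast, pow_add, mul_inv_rev]

noncomputable def qwPoly (q m r : ℂ) (n : ℕ) : ℂ[X] :=
  C (q ^ (-(n.choose 2 : ℤ))) * ∏ i ∈ range n, (X - C (r + qint q i * m))

theorem qwPoly_succ (q m r : ℂ) (n : ℕ) :
    qwPoly q m r (n + 1) = C (q ^ (-(n : ℤ))) * ((X - C (m * qint q n + r)) * qwPoly q m r n) := by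
  have hchoose : (n + 1).choose 2 = n.choose 2 + n := by
    rw [Nat.choose_succ_succ, Nat.choose_one_right, add_comm]
  rw [qwPoly, qwPoly, hchoose, zpow_neg_natCast_add, Finset.prod_range_succ, add_comm r, mul_comm m,
    map_mul]
  ring

theorem qw_eq_coeff_qwPoly (q m r : ℂ) (n k : ℕ) : qw q m r n k = (qwPoly q m r n).coeff k := by
  induction n generalizing k with
  | zero => cases k <;> simp [qw, qwPoly, coeff_one]
  | succ n ih =>
    rw [qwPoly_succ, coeff_C_mul, sub_mul, coeff_sub, coeff_C_mul]
    cases k with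
    | zero => rw [coeff_X_mul_zero, ← ih, qw]
    | succ k => rw [coeff_X_mul, ← ih, ← ih, qw]

theorem stmt8_general (q m r : ℂ) (n k : ℕ) (hkn : k ≤ n) :
    qw q m r n k =
      (-1) ^ (n - k) * q ^ (-(n.choose 2 : ℤ)) *
        ∑ s ∈ Finset.powersetCard (n - k) (Finset.range n),
          ∏ i ∈ s, (r + qint q i * m) := by
  rw [qw_eq_coeff_qwPoly, qwPoly, coeff_C_mul,
    Finset.prod_X_sub_C_coeff _ _ (by rwa [Finset.card_range]), Finset.card_range]
  ring

theorem stmt8 (q m r : ℂ) (hq0 : q ≠ 0) (hq1 : q ≠ 1) (n k : ℕ) (hkn : k ≤ n) :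
    qw q m r n k =
      (-1) ^ (n - k) * q ^ (-(n.choose 2 : ℤ)) *
        ∑ s ∈ Finset.powersetCard (n - k) (Finset.range n),
          ∏ i ∈ s, (r + qint q i * m) :=
  stmt8_general q m r n k hkn
end

section
/- For all 0 ≤ k ≤ n, W_{m,r,q}(n,k) = q^{C(k,2)} times the sum over all weakly increasing sequences 0 ≤ j_1 ≤ j_2 ≤ ... ≤ j_{n-k} ≤ k of the products ∏_{i=1}^{n-k} (m[j_i]_q + r). -/
open Finset

/-! The sum is the complete homogeneous symmetric polynomial `h_{n-k}(x_0, …, x_k)` in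
`x_j = m[j]_q + r`. Splitting weakly increasing sequences according to whether they reach the top
value gives `h_{a+1}(x_0, …, x_{b+1}) = h_{a+1}(x_0, …, x_b) + x_{b+1} h_a(x_0, …, x_{b+1})`, and
since `q^C(k+1,2) = q^k q^C(k,2)` this is exactly the recurrence defining `W`. -/

theorem Fin.monotone_snoc_top {α : Type*} [Preorder α] [OrderTop α] {n : ℕ} {g : Fin n → α}
    (hg : Monotone g) : Monotone (Fin.snoc g ⊤ : Fin (n + 1) → α) := by
  intro i j hij
  obtain ⟨j, rfl⟩ | rfl := j.eq_castSucc_or_eq_last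
  · obtain ⟨i, rfl⟩ :=
      i.eq_castSucc_of_ne_last (Fin.ne_last_of_lt (hij.trans_lt j.castSucc_lt_last))
    simpa using hg (Fin.castSucc_le_castSucc_iff.mp hij)
  · simp

section CompleteHomogeneous

variable {R : Type*} [CommSemiring R]

open Classical in
/-- The complete homogeneous symmetric polynomial `h_a (c 0, …, c b)`. -/
noncomputable def completeHomogeneous (c : ℕ → R) (a b : ℕ) : R :=
  ∑ f ∈ univ.filter (fun f : Fin a → Fin (b + 1) => Monotone f), ∏ i, c (f i)

theorem completeHomogeneous_zero_left (c : ℕ → R) (b : ℕ) :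
    completeHomogeneous c 0 b = 1 := by
  rw [completeHomogeneous, filter_true_of_mem fun f _ => Subsingleton.monotone f]
  simp

theorem completeHomogeneous_zero_right (c : ℕ → R) (a : ℕ) :
    completeHomogeneous c a 0 = c 0 ^ a := by
  rw [completeHomogeneous,
    filter_true_of_mem fun f _ _ _ _ => (Subsingleton.elim (α := Fin 1) _ _).le]
  simp [Subsingleton.elim _ (0 : Fin 1)]

open Classical in
theorem sum_monotone_last_ne_last (c : ℕ → R) (a b : ℕ) :
    ∑ f ∈ univ.filter (fun f : Fin (a + 1) → Fin (b + 2) =>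
        Monotone f ∧ ¬ f (Fin.last a) = Fin.last (b + 1)), ∏ i, c (f i) =
      completeHomogeneous c (a + 1) b := by
  symm
  refine sum_nbij (fun g => Fin.castSucc ∘ g) ?_ ?_ ?_ fun g _ => rfl
  · simp only [mem_filter, mem_univ, true_and]
    exact fun g hg => ⟨Fin.strictMono_castSucc.monotone.comp hg, (g _).castSucc_lt_last.ne⟩
  · exact fun g _ g' _ h => funext fun i => Fin.castSucc_injective _ (congrFun h i)
  · intro f hf
    simp only [coe_filter, mem_univ, true_and, Set.mem_ofPred_eq] at hf
    obtain ⟨hmono, hlast⟩ := hf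
    have hne : ∀ i, f i ≠ Fin.last (b + 1) := fun i =>
      ((hmono (Fin.le_last i)).trans_lt (Fin.lt_last_iff_ne_last.2 hlast)).ne
    refine ⟨fun i => (f i).castPred (hne i), ?_, funext fun i => Fin.castSucc_castPred _ _⟩
    simp only [coe_filter, mem_univ, true_and, Set.mem_ofPred_eq]
    exact fun i j hij => Fin.castPred_le_castPred_iff.2 (hmono hij)

open Classical in
theorem sum_monotone_last_eq_last (c : ℕ → R) (a b : ℕ) :
    ∑ f ∈ univ.filter (fun f : Fin (a + 1) → Fin (b + 2) =>
        Monotone f ∧ f (Fin.last a) = Fin.last (b + 1)), ∏ i, c (f i) =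
      c (b + 1) * completeHomogeneous c a (b + 1) := by
  rw [completeHomogeneous, mul_sum]
  symm
  refine sum_nbij (fun g => Fin.snoc g (Fin.last (b + 1))) ?_
    (Fin.snoc_left_injective (α := fun _ => Fin (b + 2)) _).injOn ?_ ?_
  · simp only [mem_filter, mem_univ, true_and, Fin.snoc_last, and_true]
    intro g hg
    simpa only [Fin.top_eq_last] using Fin.monotone_snoc_top hg
  · intro f hf
    simp only [coe_filter, mem_univ, true_and, Set.mem_ofPred_eq] at hf
    obtain ⟨hmono, hlast⟩ := hf
    refine ⟨Fin.init f, ?_, ?_⟩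
    · simp only [coe_filter, mem_univ, true_and, Set.mem_ofPred_eq]
      exact hmono.comp Fin.strictMono_castSucc.monotone
    · rw [← hlast]
      exact Fin.snoc_init_self f
  · intro g _
    simp [Fin.prod_univ_castSucc, mul_comm]

theorem completeHomogeneous_succ_succ (c : ℕ → R) (a b : ℕ) :
    completeHomogeneous c (a + 1) (b + 1) =
      completeHomogeneous c (a + 1) b + c (b + 1) * completeHomogeneous c a (b + 1) := by
  classical
  rw [completeHomogeneous, ← sum_filter_add_sum_filter_not _
      (fun f => f (Fin.last a) = Fin.last (b + 1)), filter_filter, filter_filter,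
    sum_monotone_last_eq_last, sum_monotone_last_ne_last, add_comm]

end CompleteHomogeneous

theorem qW_eq_completeHomogeneous (q m r : ℂ) : ∀ {n k : ℕ}, k ≤ n →
    qW q m r n k = q ^ k.choose 2 * completeHomogeneous (fun j => m * qint q j + r) (n - k) k
  | 0, 0, _ => by simp [qW, completeHomogeneous_zero_left]
  | n + 1, 0, _ => by
    rw [qW, qW_eq_completeHomogeneous q m r n.zero_le]
    simp only [completeHomogeneous_zero_right, Nat.sub_zero]
    ring
  | n + 1, k + 1, h => by
    have choose_succ : (k + 1).choose 2 = k.choose 2 + k := by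
      rw [Nat.choose_succ_succ, Nat.choose_one_right, add_comm]
    rw [qW]
    obtain rfl | hk := (Nat.le_of_succ_le_succ h).eq_or_lt
    · rw [qW_eq_zero_of_lt q m r k.lt_succ_self, qW_eq_completeHomogeneous q m r le_rfl]
      simp only [Nat.sub_self, completeHomogeneous_zero_left, choose_succ]
      ring
    · rw [qW_eq_completeHomogeneous q m r hk.le, qW_eq_completeHomogeneous q m r hk,
        show n + 1 - (k + 1) = n - (k + 1) + 1 by omega, completeHomogeneous_succ_succ,
        show n - (k + 1) + 1 = n - k by omega, choose_succ]
      ring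

open Classical in
theorem stmt10_general (q m r : ℂ) (n k : ℕ) (hkn : k ≤ n) :
    qW q m r n k =
      q ^ k.choose 2 *
        ∑ f ∈ Finset.univ.filter (fun f : Fin (n - k) → Fin (k + 1) => Monotone f),
          ∏ i : Fin (n - k), (m * qint q (f i) + r) :=
  qW_eq_completeHomogeneous q m r hkn

open Classical in
theorem stmt10 (q m r : ℂ) (hq0 : q ≠ 0) (hq1 : q ≠ 1) (n k : ℕ) (hkn : k ≤ n) :
    qW q m r n k =
      q ^ k.choose 2 *
        ∑ f ∈ Finset.univ.filter (fun f : Fin (n - k) → Fin (k + 1) => Monotone f),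
          ∏ i : Fin (n - k), (m * qint q (f i) + r) :=
  stmt10_general q m r n k hkn
end

section
/- For all non-negative integers n, j, p, the convolution identity W_{m,r,q}(n+1, j+p+1) = ∑_{k=0}^{n} q^{p + pj + j} W_{m,r,q}(k,p) W_{m̂,r̂,q}(n-k, j) holds, where m̂ = m q^{p+1} and r̂ = m[p+1]_q + r. -/
open Finset

/-
Both sides satisfy, as functions of `(n, j)`, the recurrence of `W_{m,r,q}(n + 1, j + p + 1)`
with the same initial values. On the right this rests on unfolding the recurrence of the second
factor `Ŵ = W_{m̂,r̂,q}` and on the identity `m̂ [j]_q + r̂ = m [j + p + 1]_q + r`, which is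
`[p + 1 + j]_q = [p + 1]_q + q^(p+1) [j]_q`.
-/

theorem qint_zero (q : ℂ) : qint q 0 = 0 := by
  simp [qint]

theorem qint_add (q : ℂ) (a b : ℕ) : qint q (a + b) = qint q a + q ^ a * qint q b := by
  simp only [qint]
  ring

theorem mul_pow_mul_qint_add (q m r : ℂ) (p j : ℕ) :
    m * q ^ (p + 1) * qint q j + (m * qint q (p + 1) + r) = m * qint q (j + p + 1) + r := by
  rw [show j + p + 1 = p + 1 + j by omega, qint_add q (p + 1) j]
  ring

section qW

variable (q m r : ℂ)

@[simp] theorem qW_zero_zero : qW q m r 0 0 = 1 := rfl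

@[simp] theorem qW_zero_succ (k : ℕ) : qW q m r 0 (k + 1) = 0 := rfl

theorem qW_succ_zero (n : ℕ) : qW q m r (n + 1) 0 = r * qW q m r n 0 := by
  simp [qW, qint_zero]

theorem qW_succ_succ (n k : ℕ) :
    qW q m r (n + 1) (k + 1) = q ^ k * qW q m r n k + (m * qint q (k + 1) + r) * qW q m r n (k + 1) :=
  rfl

noncomputable def qWConv (p n j : ℕ) : ℂ :=
  ∑ k ∈ range (n + 1),
    q ^ (p + p * j + j) * qW q m r k p * qW q (m * q ^ (p + 1)) (m * qint q (p + 1) + r) (n - k) j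

theorem qWConv_zero_zero (p : ℕ) : qWConv q m r p 0 0 = q ^ p * qW q m r 0 p := by
  simp [qWConv]

theorem qWConv_zero_succ (p j : ℕ) : qWConv q m r p 0 (j + 1) = 0 := by
  simp [qWConv]

theorem qWConv_succ_zero (p n : ℕ) :
    qWConv q m r p (n + 1) 0 =
      q ^ p * qW q m r (n + 1) p + (m * qint q (p + 1) + r) * qWConv q m r p n 0 := by
  rw [qWConv, qWConv, sum_range_succ, Nat.sub_self, qW_zero_zero, mul_sum, add_comm]
  congr 1
  · ring
  · refine sum_congr rfl fun k hk => ?_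
    rw [Nat.sub_add_comm (mem_range_succ_iff.mp hk), qW_succ_zero]
    ring

theorem qWConv_succ_succ (p n j : ℕ) :
    qWConv q m r p (n + 1) (j + 1) =
      q ^ (j + p + 1) * qWConv q m r p n j +
        (m * qint q (j + 1 + p + 1) + r) * qWConv q m r p n (j + 1) := by
  rw [qWConv, qWConv, qWConv, sum_range_succ, Nat.sub_self, qW_zero_succ, mul_zero, add_zero,
    mul_sum, mul_sum, ← sum_add_distrib]
  refine sum_congr rfl fun k hk => ?_
  rw [Nat.sub_add_comm (mem_range_succ_iff.mp hk), qW_succ_succ, mul_pow_mul_qint_add]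
  ring

end qW

theorem stmt17_general (q m r : ℂ) (n j p : ℕ) :
    qW q m r (n + 1) (j + p + 1) =
      ∑ k ∈ Finset.range (n + 1),
        q ^ (p + p * j + j) * qW q m r k p *
          qW q (m * q ^ (p + 1)) (m * qint q (p + 1) + r) (n - k) j := by
  show _ = qWConv q m r p n j
  induction n generalizing j with
  | zero =>
    cases j with
    | zero => simp [qWConv_zero_zero, qW_succ_succ]
    | succ j =>
      rw [qWConv_zero_succ, show j + 1 + p = j + p + 1 by omega, qW_succ_succ]
      simp
  | succ n ih =>
    cases j with
    | zero => rw [qWConv_succ_zero, ← ih 0, zero_add, qW_succ_succ]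
    | succ j =>
      rw [qWConv_succ_succ, ← ih j, ← ih (j + 1), show j + 1 + p = j + p + 1 by omega,
        qW_succ_succ]

theorem stmt17 (q m r : ℂ) (hq0 : q ≠ 0) (hq1 : q ≠ 1) (n j p : ℕ) :
    qW q m r (n + 1) (j + p + 1) =
      ∑ k ∈ Finset.range (n + 1),
        q ^ (p + p * j + j) * qW q m r k p *
          qW q (m * q ^ (p + 1)) (m * qint q (p + 1) + r) (n - k) j :=
  stmt17_general q m r n j p
end
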